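/- arXiv:2601.21985 — 2 statements merged into one kernel-verified Lean document; each statement's English description precedes it below -/
import Mathlib

section
/- Let P and Q be probability measures with P absolutely continuous with respect to Q, and suppose e^{−ε} ≤ dP/dQ ≤ e^{ε} holds Q-almost everywhere for some ε ≥ 0. Then the total variation distance satisfies ‖P − Q‖_TV ≤ tanh(ε/2). -/
open MeasureTheory Real

/-! The map `t ↦ (t - 1) / (t + 1)` is increasing and sends `e^{±ε}` to `± tanh (ε / 2)`, so
`|t - 1| ≤ tanh (ε / 2) * (t + 1)` whenever `e^{-ε} ≤ t ≤ e^ε`. Applied to `t = dP/dQ` and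
integrated against `Q`, the right-hand side becomes `tanh (ε / 2) * (1 + 1)`. -/

lemma Real.tanh_half_eq (x : ℝ) : tanh (x / 2) = (exp x - 1) / (exp x + 1) := by
  have hx : exp x = exp (x / 2) * exp (x / 2) := by rw [← exp_add, add_halves]
  rw [tanh_eq, exp_neg, hx]
  field_simp

lemma abs_sub_one_le_tanh_half_mul {ε t : ℝ} (hlo : exp (-ε) ≤ t) (hhi : t ≤ exp ε) :
    |t - 1| ≤ tanh (ε / 2) * (t + 1) := by
  have hb : 0 < exp ε := exp_pos ε
  have hbt : 1 ≤ exp ε * t := by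
    rwa [exp_neg, inv_le_iff_one_le_mul₀' hb] at hlo
  rw [tanh_half_eq, div_mul_eq_mul_div, le_div_iff₀ (by positivity)]
  rcases le_or_gt 1 t with ht | ht
  · rw [abs_of_nonneg (by linarith)]
    nlinarith
  · rw [abs_of_neg (by linarith)]
    nlinarith

theorem stmt_1_general {X : Type*} [MeasurableSpace X] (P Q : Measure X)
    [IsProbabilityMeasure P] [IsProbabilityMeasure Q]
    (hPQ : P ≪ Q) (ε : ℝ)
    (hratio : ∀ᵐ x ∂Q, Real.exp (-ε) ≤ (P.rnDeriv Q x).toReal ∧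
        (P.rnDeriv Q x).toReal ≤ Real.exp ε) :
    (1 / 2) * ∫ x, |(P.rnDeriv Q x).toReal - 1| ∂Q ≤ Real.tanh (ε / 2) := by
  set f := fun x => (P.rnDeriv Q x).toReal
  have hf : Integrable f Q := Measure.integrable_toReal_rnDeriv
  have hf_one : ∫ x, f x ∂Q = 1 := by simp [f, Measure.integral_toReal_rnDeriv hPQ]
  have hbound : Integrable (fun x => tanh (ε / 2) * (f x + 1)) Q :=
    (hf.add (integrable_const 1)).const_mul _
  calc (1 / 2) * ∫ x, |f x - 1| ∂Q
      ≤ (1 / 2) * ∫ x, tanh (ε / 2) * (f x + 1) ∂Q := by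
        refine mul_le_mul_of_nonneg_left ?_ (by norm_num)
        refine integral_mono_ae (hf.sub (integrable_const 1)).abs hbound ?_
        filter_upwards [hratio] with x hx using abs_sub_one_le_tanh_half_mul hx.1 hx.2
    _ = tanh (ε / 2) := by
        rw [integral_const_mul, integral_add hf (integrable_const 1), hf_one]
        simp only [integral_const, probReal_univ, smul_eq_mul]
        ring

theorem stmt_1 {X : Type*} [MeasurableSpace X] (P Q : Measure X)
    [IsProbabilityMeasure P] [IsProbabilityMeasure Q]
    (hPQ : P ≪ Q) (ε : ℝ) (hε : 0 ≤ ε)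
    (hratio : ∀ᵐ x ∂Q, Real.exp (-ε) ≤ (P.rnDeriv Q x).toReal ∧
        (P.rnDeriv Q x).toReal ≤ Real.exp ε) :
    (1 / 2) * ∫ x, |(P.rnDeriv Q x).toReal - 1| ∂Q ≤ Real.tanh (ε / 2) :=
  stmt_1_general P Q hPQ ε hratio
end

section
/- Let μ be a probability measure on X, β > 0, and E₁, E₂: X → ℝ bounded measurable functions with sup_{z∈X} |E₁(z) − E₂(z)| ≤ δ. Define the Gibbs measures ρᵢ(dz) = Zᵢ⁻¹ exp(−β Eᵢ(z)) μ(dz) with Zᵢ = ∫ exp(−β Eᵢ) dμ. Then ‖ρ₁ − ρ₂‖_TV ≤ tanh(βδ). -/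
open MeasureTheory Real

lemma aux_abs_bound (a b r : ℝ) (ha : 0 < a) (hb : 0 < b) (hr : 1 ≤ r)
    (h1 : a ≤ r * b) (h2 : b ≤ r * a) : |a - b| ≤ (r - 1) / (r + 1) * (a + b) := by
  have hr1 : (0:ℝ) < r + 1 := by linarith
  have key : ∀ x y : ℝ, x ≤ r * y → x - y ≤ (r - 1) / (r + 1) * (x + y) := by
    intro x y hxy
    rw [div_mul_eq_mul_div, le_div_iff₀ hr1]
    nlinarith
  rw [abs_sub_le_iff]
  refine ⟨key a b h1, ?_⟩
  have h := key b a h2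
  rwa [add_comm b a] at h

theorem stmt_2 {X : Type*} [MeasurableSpace X] (μ : Measure X) [IsProbabilityMeasure μ]
    (β δ : ℝ) (hβ : 0 < β) (hδ : 0 ≤ δ)
    (E₁ E₂ : X → ℝ) (hE₁ : Measurable E₁) (hE₂ : Measurable E₂)
    (C : ℝ) (hb₁ : ∀ z, |E₁ z| ≤ C) (hb₂ : ∀ z, |E₂ z| ≤ C)
    (hclose : ∀ z, |E₁ z - E₂ z| ≤ δ)
    (Z₁ Z₂ : ℝ) (hZ₁ : Z₁ = ∫ z, Real.exp (-β * E₁ z) ∂μ)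
    (hZ₂ : Z₂ = ∫ z, Real.exp (-β * E₂ z) ∂μ) :
    (1 / 2) * ∫ z, |Real.exp (-β * E₁ z) / Z₁ - Real.exp (-β * E₂ z) / Z₂| ∂μ ≤
      Real.tanh (β * δ) := by
  set f₁ : X → ℝ := fun z => Real.exp (-β * E₁ z) with hf₁
  set f₂ : X → ℝ := fun z => Real.exp (-β * E₂ z) with hf₂
  have hm₁ : Measurable f₁ := (Real.measurable_exp.comp (hE₁.const_mul (-β)))
  have hm₂ : Measurable f₂ := (Real.measurable_exp.comp (hE₂.const_mul (-β)))
  have hbd₁ : ∀ z, f₁ z ≤ Real.exp (β * C) := fun z => by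
    have := (abs_le.1 (hb₁ z)).1
    exact Real.exp_le_exp.2 (by nlinarith)
  have hbd₂ : ∀ z, f₂ z ≤ Real.exp (β * C) := fun z => by
    have := (abs_le.1 (hb₂ z)).1
    exact Real.exp_le_exp.2 (by nlinarith)
  have hint₁ : Integrable f₁ μ := by
    refine Integrable.mono' (integrable_const (Real.exp (β * C))) hm₁.aestronglyMeasurable ?_
    filter_upwards with z
    rw [Real.norm_eq_abs, abs_of_pos (Real.exp_pos _)]
    exact hbd₁ z
  have hint₂ : Integrable f₂ μ := by
    refine Integrable.mono' (integrable_const (Real.exp (β * C))) hm₂.aestronglyMeasurable ?_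
    filter_upwards with z
    rw [Real.norm_eq_abs, abs_of_pos (Real.exp_pos _)]
    exact hbd₂ z
  have hZ₁pos : 0 < Z₁ := hZ₁ ▸ integral_exp_pos hint₁
  have hZ₂pos : 0 < Z₂ := hZ₂ ▸ integral_exp_pos hint₂
  set r : ℝ := Real.exp (2 * (β * δ)) with hrdef
  have hr1 : 1 ≤ r := Real.one_le_exp (by positivity)
  have hrpos : (0:ℝ) < r + 1 := by linarith
  -- pointwise f₁ ≤ exp(βδ) f₂ and vice versa
  have hpt₁ : ∀ z, f₁ z ≤ Real.exp (β * δ) * f₂ z := fun z => by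
    rw [← Real.exp_add]
    refine Real.exp_le_exp.2 ?_
    have h : β * (E₂ z - E₁ z) ≤ β * δ :=
      mul_le_mul_of_nonneg_left (by linarith [(abs_le.1 (hclose z)).1]) hβ.le
    linarith
  have hpt₂ : ∀ z, f₂ z ≤ Real.exp (β * δ) * f₁ z := fun z => by
    rw [← Real.exp_add]
    refine Real.exp_le_exp.2 ?_
    have h : β * (E₁ z - E₂ z) ≤ β * δ :=
      mul_le_mul_of_nonneg_left (by linarith [(abs_le.1 (hclose z)).2]) hβ.le
    linarith
  have hZZ₁ : Z₁ ≤ Real.exp (β * δ) * Z₂ := by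
    rw [hZ₁, hZ₂, ← integral_const_mul]
    exact integral_mono hint₁ (hint₂.const_mul _) hpt₁
  have hZZ₂ : Z₂ ≤ Real.exp (β * δ) * Z₁ := by
    rw [hZ₂, hZ₁, ← integral_const_mul]
    exact integral_mono hint₂ (hint₁.const_mul _) hpt₂
  have hexppos : (0:ℝ) < Real.exp (β * δ) := Real.exp_pos _
  -- pointwise bound on densities
  have hee : Real.exp (β * δ) * Real.exp (β * δ) = r := by
    rw [← Real.exp_add, hrdef]; ring_nf
  have hptwise : ∀ z, |f₁ z / Z₁ - f₂ z / Z₂| ≤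
      (r - 1) / (r + 1) * (f₁ z / Z₁ + f₂ z / Z₂) := by
    intro z
    refine aux_abs_bound _ _ r (by positivity) (by positivity) hr1 ?_ ?_
    · rw [← mul_div_assoc, div_le_div_iff₀ hZ₁pos hZ₂pos]
      calc f₁ z * Z₂ ≤ (Real.exp (β * δ) * f₂ z) * (Real.exp (β * δ) * Z₁) :=
            mul_le_mul (hpt₁ z) hZZ₂ hZ₂pos.le (by positivity)
        _ = r * f₂ z * Z₁ := by rw [← hee]; ring
    · rw [← mul_div_assoc, div_le_div_iff₀ hZ₂pos hZ₁pos]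
      calc f₂ z * Z₁ ≤ (Real.exp (β * δ) * f₁ z) * (Real.exp (β * δ) * Z₂) :=
            mul_le_mul (hpt₂ z) hZZ₁ hZ₁pos.le (by positivity)
        _ = r * f₁ z * Z₂ := by rw [← hee]; ring
  have hg₁ : Integrable (fun z => f₁ z / Z₁) μ := hint₁.div_const _
  have hg₂ : Integrable (fun z => f₂ z / Z₂) μ := hint₂.div_const _
  have hintabs : Integrable (fun z => |f₁ z / Z₁ - f₂ z / Z₂|) μ := (hg₁.sub hg₂).abs
  have hintrhs : Integrable (fun z => (r - 1) / (r + 1) * (f₁ z / Z₁ + f₂ z / Z₂)) μ :=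
    (hg₁.add hg₂).const_mul _
  have hmono : ∫ z, |f₁ z / Z₁ - f₂ z / Z₂| ∂μ ≤
      ∫ z, (r - 1) / (r + 1) * (f₁ z / Z₁ + f₂ z / Z₂) ∂μ :=
    integral_mono hintabs hintrhs hptwise
  have hrhs : ∫ z, (r - 1) / (r + 1) * (f₁ z / Z₁ + f₂ z / Z₂) ∂μ =
      (r - 1) / (r + 1) * 2 := by
    rw [integral_const_mul, integral_add hg₁ hg₂, integral_div, integral_div,
      ← hZ₁, ← hZ₂, div_self hZ₁pos.ne', div_self hZ₂pos.ne']
    norm_num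
  have htanh : Real.tanh (β * δ) = (r - 1) / (r + 1) := by
    rw [Real.tanh_eq_sinh_div_cosh, Real.sinh_eq, Real.cosh_eq, hrdef]
    have h1 : Real.exp (2 * (β * δ)) = Real.exp (β * δ) * Real.exp (β * δ) := by
      rw [← Real.exp_add]; ring_nf
    have h2 : Real.exp (-(β * δ)) = (Real.exp (β * δ))⁻¹ := Real.exp_neg _
    rw [h1, h2]
    have he : Real.exp (β * δ) ≠ 0 := (Real.exp_pos _).ne'
    field_simp
  rw [htanh]
  calc (1/2) * ∫ z, |f₁ z / Z₁ - f₂ z / Z₂| ∂μ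
      ≤ (1/2) * ((r - 1) / (r + 1) * 2) := by
        refine mul_le_mul_of_nonneg_left ?_ (by norm_num)
        rw [← hrhs]; exact hmono
    _ = (r - 1) / (r + 1) := by ring
end
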